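/- arXiv:2206.08116 — 7 statements merged into one kernel-verified Lean document; each statement's English description precedes it below -/
import Mathlib

section
/- For every even integer n ≥ 2, the polynomial X^n − X − 1 has exactly two real roots, i.e. the set {x ∈ ℝ : x^n − x − 1 = 0} has exactly two elements. -/
/-!
For even `n ≥ 2` the function `x ↦ x ^ n - x - 1` is strictly convex on `ℝ`, so it has at most
two zeros, and any negative value lies strictly between them. It is positive at `-1` and `2`
and negative at `0`, so the intermediate value theorem gives one zero on each side of `0`.
-/

open Set

section StrictConvexZeros

variable {s : Set ℝ} {f : ℝ → ℝ}

lemma StrictConvexOn.neg_of_zero_of_zero (hf : StrictConvexOn ℝ s f) {a b c : ℝ} (ha : a ∈ s)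
    (hc : c ∈ s) (hab : a < b) (hbc : b < c) (hfa : f a = 0) (hfc : f c = 0) : f b < 0 := by
  have hb : b ∈ openSegment ℝ a c := by
    rw [openSegment_eq_Ioo (hab.trans hbc)]
    exact ⟨hab, hbc⟩
  simpa [hfa, hfc] using hf.lt_on_openSegment ha hc (hab.trans hbc).ne hb

lemma StrictConvexOn.eq_or_eq_of_zero (hf : StrictConvexOn ℝ s f) {a b x : ℝ} (ha : a ∈ s)
    (hb : b ∈ s) (hx : x ∈ s) (hab : a < b) (hfa : f a = 0) (hfb : f b = 0) (hfx : f x = 0) :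
    x = a ∨ x = b := by
  rcases lt_trichotomy x a with hxa | rfl | hax
  · exact absurd hfa (hf.neg_of_zero_of_zero hx hb hxa hab hfx hfb).ne
  · exact .inl rfl
  rcases lt_trichotomy x b with hxb | rfl | hbx
  · exact absurd hfx (hf.neg_of_zero_of_zero ha hb hax hxb hfa hfb).ne
  · exact .inr rfl
  · exact absurd hfb (hf.neg_of_zero_of_zero ha hx hab hbx hfa hfx).ne

theorem StrictConvexOn.ncard_zeros_eq_two (hf : StrictConvexOn ℝ univ f) {u v w : ℝ}
    (huv : u < v) (hvw : v < w) (hu : 0 < f u) (hv : f v < 0) (hw : 0 < f w) :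
    {x | f x = 0}.ncard = 2 := by
  have hcont : ContinuousOn f univ := hf.convexOn.continuousOn isOpen_univ
  obtain ⟨a, ⟨-, hav⟩, hfa⟩ :=
    intermediate_value_Ioo' huv.le (hcont.mono (subset_univ _)) ⟨hv, hu⟩
  obtain ⟨b, ⟨hvb, -⟩, hfb⟩ :=
    intermediate_value_Ioo hvw.le (hcont.mono (subset_univ _)) ⟨hv, hw⟩
  have hzeros : {x | f x = 0} = {a, b} := by
    ext x
    refine ⟨fun hfx => hf.eq_or_eq_of_zero trivial trivial trivial (hav.trans hvb) hfa hfb hfx, ?_⟩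
    rintro (rfl | rfl)
    exacts [hfa, hfb]
  rw [hzeros, ncard_pair (hav.trans hvb).ne]

end StrictConvexZeros

lemma Even.strictConvexOn_pow_sub_self_sub_one {n : ℕ} (heven : Even n) (hn : n ≠ 0) :
    StrictConvexOn ℝ univ fun x : ℝ => x ^ n - x - 1 :=
  ((heven.strictConvexOn_pow hn).sub_concaveOn (concaveOn_id convex_univ)).sub_concaveOn
    (concaveOn_const 1 convex_univ)

/-- For every even integer `n ≥ 2`, the polynomial `X^n - X - 1` has exactly two real
roots. -/
theorem even_exactly_two_real_roots (n : ℕ) (hn : 2 ≤ n) (heven : Even n) :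
    {x : ℝ | x ^ n - x - 1 = 0}.ncard = 2 := by
  refine (heven.strictConvexOn_pow_sub_self_sub_one (by omega)).ncard_zeros_eq_two
    (u := -1) (v := 0) (w := 2) (by norm_num) (by norm_num) ?_ ?_ ?_
  · simp [heven.neg_one_pow]
  · simp [zero_pow (by omega : n ≠ 0)]
  · linarith [pow_le_pow_right₀ (by norm_num : (1 : ℝ) ≤ 2) hn]
end

section
/- For every integer n ≥ 2, the discriminant of the power basis 1, x, x², …, x^{n−1} of the ℚ-algebra ℚ[X]/(X^n − X − 1) (where x denotes the class of X) equals (−1)^{(n−1)(n−2)/2} · (n^n − (1−n)^{n−1}). -/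
/-!
Write `f = X ^ n - X - 1` and `x` for its root. The discriminant of the power basis of `x` is
`± N(f'(x))`. Since `x ^ n = x + 1`, the element `x * f'(x) = n * x ^ n - x = n + (n - 1) * x` is
linear in `x`, so its norm is a value of `f` up to a power of `n - 1`, while `N(x) = ± f(0) = ±1`;
dividing gives `N(f'(x)) = ± (n ^ n - (1 - n) ^ (n - 1))`.
-/

open Polynomial

namespace PowerBasis

theorem norm_algebraMap_sub_gen {R S : Type*} [CommRing R] [CommRing S] [Algebra R S]
    (pb : PowerBasis R S) (c : R) :
    Algebra.norm R (algebraMap R S c - pb.gen) = (minpoly R pb.gen).eval c := by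
  rw [Algebra.norm_eq_matrix_det pb.basis, map_sub, AlgHom.commutes, ← charpoly_leftMulMatrix,
    Matrix.eval_charpoly, Matrix.algebraMap_eq_diagonal]
  rfl

theorem norm_algebraMap_sub_smul_gen {K S : Type*} [Field K] [CommRing S] [Algebra K S]
    (pb : PowerBasis K S) {a : K} (ha : a ≠ 0) (b : K) :
    Algebra.norm K (algebraMap K S b - a • pb.gen)
      = a ^ pb.dim * (minpoly K pb.gen).eval (b / a) := by
  have hfactor : algebraMap K S b - a • pb.gen
      = algebraMap K S a * (algebraMap K S (b / a) - pb.gen) := by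
    rw [mul_sub, ← map_mul, mul_div_cancel₀ _ ha, Algebra.smul_def]
  rw [hfactor, map_mul, Algebra.norm_algebraMap_of_basis pb.basis, Fintype.card_fin,
    norm_algebraMap_sub_gen]

end PowerBasis

section SelmerPolynomial

variable {n : ℕ}

theorem monic_X_pow_sub_X_sub_one {R : Type*} [CommRing R] [Nontrivial R] (hn : 2 ≤ n) :
    (X ^ n - X - 1 : R[X]).Monic := by
  monicity!
  simp [show 1 ≤ n by omega, show ¬n ≤ 1 by omega]

theorem natDegree_X_pow_sub_X_sub_one {R : Type*} [CommRing R] [Nontrivial R] (hn : 2 ≤ n) :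
    (X ^ n - X - 1 : R[X]).natDegree = n := by
  compute_degree!
  · simp [show 1 ≠ n by omega, show n ≠ 0 by omega]
  · omega

theorem mul_aeval_derivative_X_pow_sub_X_sub_one {R A : Type*} [CommRing R] [CommRing A]
    [Algebra R A] {x : A} (hn : 1 ≤ n) (hx : aeval x (X ^ n - X - 1 : R[X]) = 0) :
    x * aeval x (derivative (X ^ n - X - 1 : R[X])) = algebraMap R A n - (1 - n : R) • x := by
  obtain ⟨m, rfl⟩ : ∃ m, n = m + 1 := ⟨n - 1, by omega⟩
  simp only [map_sub, map_mul, map_pow, map_one, map_natCast, aeval_X, derivative_X_pow,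
    derivative_X, derivative_one, Nat.add_sub_cancel, sub_zero, Algebra.smul_def] at hx ⊢
  linear_combination ((m + 1 : ℕ) : A) * hx

theorem pow_mul_eval_div_X_pow_sub_X_sub_one {K : Type*} [Field K] {a : K} (ha : a ≠ 0) (b : K)
    (hn : 1 ≤ n) :
    a ^ n * (X ^ n - X - 1 : K[X]).eval (b / a) = b ^ n - b * a ^ (n - 1) - a ^ n := by
  obtain ⟨m, rfl⟩ : ∃ m, n = m + 1 := ⟨n - 1, by omega⟩
  simp only [eval_sub, eval_pow, eval_X, eval_one, div_pow, add_tsub_cancel_right]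
  field_simp
  ring

end SelmerPolynomial

theorem neg_one_pow_mul_sub_one_div_two_mul {M : Type*} [Monoid M] [HasDistribNeg M] {n : ℕ}
    (hn : 1 ≤ n) :
    (-1 : M) ^ (n * (n - 1) / 2) * (-1) ^ (n + 1) = (-1) ^ ((n - 1) * (n - 2) / 2) := by
  obtain ⟨m, rfl⟩ : ∃ m, n = m + 1 := ⟨n - 1, by omega⟩
  have hexp : (m + 1) * (m + 1 - 1) / 2 + (m + 1 + 1)
      = (m + 1 - 1) * (m + 1 - 2) / 2 + 2 * (m + 1) := by
    rw [← Nat.choose_two_right (m + 1), Nat.add_sub_cancel, show m + 1 - 2 = m - 1 by omega,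
      ← Nat.choose_two_right m, Nat.choose_succ_succ', Nat.choose_one_right]
    ring
  rw [← pow_add, hexp, pow_add, pow_mul, neg_one_sq, one_pow, mul_one]

section Discriminant

variable {K L : Type*} [Field K] [Field L] [Algebra K L] {n : ℕ}

theorem norm_aeval_derivative_X_pow_sub_X_sub_one (pb : PowerBasis K L)
    (hpb : minpoly K pb.gen = X ^ n - X - 1) (hn : 2 ≤ n) (hn' : (1 - n : K) ≠ 0) :
    Algebra.norm K (aeval pb.gen (derivative (X ^ n - X - 1 : K[X])))
      = (-1) ^ (n + 1) * ((n : K) ^ n - (1 - n) ^ (n - 1)) := by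
  have hdim : pb.dim = n := by
    rw [← pb.natDegree_minpoly, hpb, natDegree_X_pow_sub_X_sub_one hn]
  have hroot : aeval pb.gen (X ^ n - X - 1 : K[X]) = 0 := hpb ▸ minpoly.aeval K pb.gen
  have hnorm_gen : Algebra.norm K pb.gen = (-1) ^ (n + 1) := by
    rw [Algebra.PowerBasis.norm_gen_eq_coeff_zero_minpoly, hdim, hpb]
    simp [show 0 ≠ n by omega, pow_succ]
  have hnorm_mul := congrArg (Algebra.norm K)
    (mul_aeval_derivative_X_pow_sub_X_sub_one (by omega) hroot)
  rw [map_mul, hnorm_gen, PowerBasis.norm_algebraMap_sub_smul_gen pb hn', hdim, hpb,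
    pow_mul_eval_div_X_pow_sub_X_sub_one hn' _ (by omega)] at hnorm_mul
  have hsign : (-1 : K) ^ (n + 1) * (-1) ^ (n + 1) = 1 := by
    rw [← mul_pow, neg_one_mul, neg_neg, one_pow]
  have hpow : (1 - n : K) ^ n = (1 - n) ^ (n - 1) * (1 - n) := by
    rw [← pow_succ, Nat.sub_add_cancel (by omega)]
  set N := Algebra.norm K (aeval pb.gen (derivative (X ^ n - X - 1 : K[X])))
  linear_combination -N * hsign + (-1) ^ (n + 1) * hnorm_mul - (-1) ^ (n + 1) * hpow

theorem discr_powerBasis_of_minpoly_eq_X_pow_sub_X_sub_one [Algebra.IsSeparable K L]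
    (pb : PowerBasis K L) (hpb : minpoly K pb.gen = X ^ n - X - 1) (hn : 2 ≤ n)
    (hn' : (1 - n : K) ≠ 0) :
    Algebra.discr K pb.basis
      = (-1) ^ ((n - 1) * (n - 2) / 2) * ((n : K) ^ n - (1 - n) ^ (n - 1)) := by
  have : Module.Finite K L := pb.finite
  rw [Algebra.discr_powerBasis_eq_norm, hpb,
    norm_aeval_derivative_X_pow_sub_X_sub_one pb hpb hn hn', ← mul_assoc, pb.finrank,
    ← pb.natDegree_minpoly, hpb, natDegree_X_pow_sub_X_sub_one hn,
    neg_one_pow_mul_sub_one_div_two_mul (by omega)]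

end Discriminant

/-- For every integer `n ≥ 2`, the discriminant of the power basis `1, x, …, x^{n-1}`
of `ℚ[X]/(X^n - X - 1)` equals `(-1)^{(n-1)(n-2)/2} · (n^n - (1-n)^{n-1})`. -/
theorem discr_powerBasis_adjoinRoot (n : ℕ) (hn : 2 ≤ n)
    (hf : (X ^ n - X - 1 : ℚ[X]) ≠ 0) :
    Algebra.discr ℚ ⇑(AdjoinRoot.powerBasis hf).basis
      = (-1) ^ ((n - 1) * (n - 2) / 2) * ((n : ℚ) ^ n - (1 - (n : ℚ)) ^ (n - 1)) := by
  have : Fact (Irreducible (X ^ n - X - 1 : ℚ[X])) :=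
    ⟨X_pow_sub_X_sub_one_irreducible_rat (by omega)⟩
  refine discr_powerBasis_of_minpoly_eq_X_pow_sub_X_sub_one _ ?_ hn ?_
  · exact AdjoinRoot.minpoly_powerBasis_gen_of_monic (monic_X_pow_sub_X_sub_one hn) hf
  · have : (2 : ℚ) ≤ n := by exact_mod_cast hn
    linarith
end

section
/- Let n ≥ 2 be an integer, p a prime, and F an algebraic closure of 𝔽_p = ℤ/pℤ. If a ∈ F is a root of X^n − X − 1 of multiplicity at least 2, then p is odd, the image of n in F is neither 0 nor 1, a = n/(1 − n) in F, and the multiplicity of a as a root of X^n − X − 1 is exactly 2. -/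
open Polynomial

/-- Let `n ≥ 2`, `p` prime and `F` an algebraic closure of `𝔽_p`. If `a ∈ F` is a root
of `X^n - X - 1` of multiplicity at least `2`, then `p` is odd, the image of `n` in `F`
is neither `0` nor `1`, `a = n/(1-n)` and the multiplicity is exactly `2`. -/
theorem multiple_root_of_selmer_poly (n : ℕ) (hn : 2 ≤ n) (p : ℕ) [Fact p.Prime]
    (F : Type) [Field F] [Algebra (ZMod p) F] [IsAlgClosed F] [Algebra.IsAlgebraic (ZMod p) F] (a : F)
    (ha : 2 ≤ (X ^ n - X - 1 : F[X]).rootMultiplicity a) :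
    Odd p ∧ (n : F) ≠ 0 ∧ (n : F) ≠ 1 ∧ a = (n : F) / (1 - (n : F)) ∧
      (X ^ n - X - 1 : F[X]).rootMultiplicity a = 2 := by
  haveI : CharP F p := charP_of_injective_algebraMap (algebraMap (ZMod p) F).injective p
  set f : F[X] := X ^ n - X - 1 with hf
  have hf0 : f ≠ 0 := by
    intro h
    have := congrArg (eval 0) h
    simp [hf, zero_pow (by omega : n ≠ 0)] at this
  have hdf : derivative f = C (n : F) * X ^ (n - 1) - 1 := by
    simp [hf, derivative_X_pow]
  obtain ⟨h0, h1⟩ := (one_lt_rootMultiplicity_iff_isRoot hf0).mp (show 1 < f.rootMultiplicity a by omega)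
  have h0' : a ^ n = a + 1 := by
    have := h0
    simp only [IsRoot, hf, eval_sub, eval_pow, eval_X, eval_one] at this
    linear_combination this
  have h1' : (n : F) * a ^ (n - 1) = 1 := by
    have := h1
    rw [hdf] at this
    simp only [IsRoot, eval_sub, eval_mul, eval_C, eval_pow, eval_X, eval_one] at this
    linear_combination this
  have hnF : (n : F) ≠ 0 := by
    intro h; rw [h, zero_mul] at h1'; exact zero_ne_one h1'
  have ha0 : a ≠ 0 := by
    intro h
    rw [h, zero_pow (by omega : n - 1 ≠ 0), mul_zero] at h1'
    exact zero_ne_one h1'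
  have hkey : a * (1 - (n : F)) = (n : F) := by
    have : (n : F) * a ^ n = a := by
      have : a ^ n = a ^ (n - 1) * a := by
        rw [← pow_succ]; congr 1; omega
      rw [this, ← mul_assoc, h1', one_mul]
    rw [h0'] at this
    linear_combination -this
  have hn1 : (n : F) ≠ 1 := by
    intro h
    rw [h] at hkey
    simp at hkey
  have hsub : (1 : F) - (n : F) ≠ 0 := fun h => hn1 (by linear_combination -h)
  have haval : a = (n : F) / (1 - (n : F)) := by
    field_simp
    linear_combination hkey
  have hpodd : Odd p := by
    have hp2 : p ≠ 2 := by
      intro hp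
      subst hp
      rcases Nat.even_or_odd n with ⟨k, hk⟩ | ⟨k, hk⟩
      · apply hnF
        have : ((n : ℕ) : F) = ((2 * k : ℕ) : F) := by rw [hk]; push_cast; ring
        rw [this]
        push_cast
        rw [show ((2 : F)) = ((2 : ℕ) : F) by push_cast; ring, CharP.cast_eq_zero F 2]
        ring
      · apply hn1
        have : ((n : ℕ) : F) = ((2 * k + 1 : ℕ) : F) := by rw [hk]
        rw [this]
        push_cast
        rw [show ((2 : F)) = ((2 : ℕ) : F) by push_cast; ring, CharP.cast_eq_zero F 2]
        ring
    exact (Fact.out : p.Prime).odd_of_ne_two hp2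
  refine ⟨hpodd, hnF, hn1, haval, le_antisymm ?_ ha⟩
  by_contra hlt
  push_neg at hlt
  have h2 : (derivative^[2] f).IsRoot a :=
    isRoot_iterate_derivative_of_lt_rootMultiplicity hlt
  have hd2 : derivative^[2] f = C (n : F) * (C ((n : F) - 1) * X ^ (n - 2)) := by
    have : derivative^[2] f = derivative (derivative f) := rfl
    rw [this, hdf]
    rw [derivative_sub, derivative_mul, derivative_C, derivative_X_pow, derivative_one]
    have : ((n - 1 : ℕ) : F) = (n : F) - 1 := by
      have : (1 : ℕ) ≤ n := by omega
      push_cast [Nat.cast_sub this]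
      ring
    rw [this]
    have h21 : n - 1 - 1 = n - 2 := by omega
    rw [h21]
    ring
  rw [hd2] at h2
  simp only [IsRoot, eval_mul, eval_C, eval_pow, eval_X] at h2
  rcases mul_eq_zero.mp h2 with h | h
  · exact hnF h
  rcases mul_eq_zero.mp h with h | h
  · exact hn1 (by linear_combination h)
  · exact pow_ne_zero _ ha0 h
end

section
/- Let n ≥ 2 be an integer and p a prime such that the polynomial X^n − X − 1 over 𝔽_p = ℤ/pℤ is not squarefree. Then the images of n and 1 − n in 𝔽_p are nonzero and, setting c := n/(1 − n) ∈ 𝔽_p, there is a polynomial g ∈ 𝔽_p[X] with X^n − X − 1 = (X − c)² · g, where g is squarefree and g(c) ≠ 0. -/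
open Polynomial

lemma aux_pow_succ_dvd_derivative {F : Type*} [CommRing F] {a p : F[X]} {k : ℕ}
    (h : a ^ (k + 1) ∣ p) : a ^ k ∣ derivative p := by
  obtain ⟨q, rfl⟩ := h
  rw [derivative_mul, derivative_pow]
  refine dvd_add ?_ ?_
  · simp only [Nat.add_sub_cancel]
    exact (((dvd_refl (a ^ k)).mul_left _).mul_right _).mul_right _
  · exact dvd_mul_of_dvd_left (pow_dvd_pow a k.le_succ) _

/-- Let `n ≥ 2` and `p` prime such that `X^n - X - 1` over `𝔽_p` is not squarefree.
Then `n` and `1 - n` are nonzero in `𝔽_p` and, with `c := n/(1-n)`, we have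
`X^n - X - 1 = (X - c)² · g` with `g` squarefree and `g(c) ≠ 0`. -/
theorem selmer_poly_mod_p_factorization (n : ℕ) (hn : 2 ≤ n) (p : ℕ) [Fact p.Prime]
    (h : ¬ Squarefree (X ^ n - X - 1 : (ZMod p)[X])) :
    (n : ZMod p) ≠ 0 ∧ (1 - (n : ZMod p)) ≠ 0 ∧
      ∃ g : (ZMod p)[X],
        (X ^ n - X - 1 : (ZMod p)[X]) = (X - C ((n : ZMod p) / (1 - (n : ZMod p)))) ^ 2 * g ∧
        Squarefree g ∧ g.eval ((n : ZMod p) / (1 - (n : ZMod p))) ≠ 0 := by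
  set f : (ZMod p)[X] := X ^ n - X - 1 with hf_def
  have hp1 : 1 ≤ n := le_trans one_le_two hn
  have hxpow : (X : (ZMod p)[X]) ^ n = X * X ^ (n - 1) := by
    conv_lhs => rw [show n = (n - 1) + 1 by omega]
    rw [pow_succ']
  have hf0 : f ≠ 0 := by
    intro hf
    have := congrArg (eval 0) hf
    simp only [hf_def, eval_sub, eval_pow, eval_X, eval_one, eval_zero,
      zero_pow (by omega : n ≠ 0), zero_sub, sub_zero] at this
    exact one_ne_zero (neg_eq_zero.mp this)
  have hder : derivative f = C (n : ZMod p) * X ^ (n - 1) - 1 := by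
    simp [hf_def, derivative_X_pow]
  have hsep : ¬ IsCoprime f (derivative f) := fun hc => h (Separable.squarefree hc)
  have hkey : X * derivative f - C (n : ZMod p) * f
      = C ((n : ZMod p) - 1) * X + C (n : ZMod p) := by
    rw [hder, hf_def, hxpow, C_sub, C_1]
    ring
  -- n ≠ 0 in F_p
  have hn0 : (n : ZMod p) ≠ 0 := by
    intro h0
    apply hsep
    rw [hder, h0]
    exact ⟨0, -1, by simp⟩
  -- 1 - n ≠ 0 in F_p
  have hn1 : (1 : ZMod p) - n ≠ 0 := by
    intro h1
    apply hsep
    have hn1' : (n : ZMod p) = 1 := by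
      have := sub_eq_zero.mp h1
      exact this.symm
    refine ⟨-C (n : ZMod p), X, ?_⟩
    rw [hder, hn1', hf_def, hxpow, C_1]
    ring
  refine ⟨hn0, hn1, ?_⟩
  set c : ZMod p := (n : ZMod p) / (1 - n) with hc_def
  have hc0 : c ≠ 0 := div_ne_zero hn0 hn1
  have hfac : C ((n : ZMod p) - 1) * X + C (n : ZMod p)
      = C ((n : ZMod p) - 1) * (X - C c) := by
    have hcc : ((n : ZMod p) - 1) * c = -(n : ZMod p) := by
      rw [hc_def]
      field_simp
      ring
    rw [mul_sub, ← C_mul, hcc, C_neg, sub_neg_eq_add]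
  have hCu : IsUnit (C ((n : ZMod p) - 1)) := by
    refine isUnit_C.mpr (isUnit_iff_ne_zero.mpr ?_)
    intro h0
    exact hn1 (by linear_combination -h0)
  -- any nonunit common divisor of f and f' is divisible by X - C c
  have hstep : ∀ q : (ZMod p)[X], q ∣ f → q ∣ derivative f → ¬ IsUnit q →
      X - C c ∣ q := by
    intro q hqf hqf' hqu
    have h1 : q ∣ C ((n : ZMod p) - 1) * (X - C c) := by
      rw [← hfac, ← hkey]
      exact dvd_sub (hqf'.mul_left X) (hqf.mul_left _)
    have h2 : q ∣ X - C c := by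
      obtain ⟨u, hu1⟩ := hCu.exists_left_inv
      have : X - C c = u * (C ((n : ZMod p) - 1) * (X - C c)) := by
        rw [← mul_assoc, hu1, one_mul]
      rw [this]
      exact h1.mul_left u
    obtain ⟨e, he⟩ := h2
    rcases (irreducible_X_sub_C c).isUnit_or_isUnit he with h | h
    · exact absurd h hqu
    · obtain ⟨v, hv⟩ := isUnit_iff_exists_inv.mp h
      exact ⟨v, by rw [he, mul_assoc, hv, mul_one]⟩
  -- X - C c divides f and f'
  have hd := EuclideanDomain.gcd_dvd_left f (derivative f)
  have hd' := EuclideanDomain.gcd_dvd_right f (derivative f)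
  have hdu : ¬ IsUnit (EuclideanDomain.gcd f (derivative f)) := by
    intro hu
    exact hsep (EuclideanDomain.gcd_isUnit_iff.mp hu)
  have hXf : X - C c ∣ f := (hstep _ hd hd' hdu).trans hd
  have hXf' : X - C c ∣ derivative f := (hstep _ hd hd' hdu).trans hd'
  -- (X - C c)^2 divides f
  have h2 : (X - C c) ^ 2 ∣ f := by
    obtain ⟨u, hu⟩ := hXf
    have hdf : derivative f = u + (X - C c) * derivative u := by
      rw [hu, derivative_mul, derivative_X_sub_C, one_mul]
    have huc : u.eval c = 0 := by
      have h0 : (derivative f).eval c = 0 := by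
        have := dvd_iff_isRoot.mp hXf'
        exact this
      rw [hdf] at h0
      simpa using h0
    obtain ⟨v, hv⟩ := dvd_iff_isRoot.mpr huc
    exact ⟨v, by rw [hu, hv, sq, mul_assoc]⟩
  -- (X - C c)^3 does not divide f
  have h3 : ¬ (X - C c) ^ 3 ∣ f := by
    intro h3
    have hA : (X - C c) ^ 2 ∣ derivative f := aux_pow_succ_dvd_derivative h3
    have hB : (X - C c) ∣ derivative (derivative f) := by
      simpa using aux_pow_succ_dvd_derivative (k := 1) hA
    have h0 : (derivative (derivative f)).eval c = 0 := dvd_iff_isRoot.mp hB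
    rw [hder] at h0
    simp only [derivative_sub, derivative_one, derivative_mul, derivative_C,
      derivative_X_pow, zero_mul, zero_add, sub_zero, eval_mul, eval_C, eval_pow,
      eval_X] at h0
    have hcast : ((n - 1 : ℕ) : ZMod p) = (n : ZMod p) - 1 := by
      push_cast [Nat.cast_sub hp1]
      ring
    rw [hcast] at h0
    have hne : (n : ZMod p) * (((n : ZMod p) - 1) * c ^ (n - 1 - 1)) ≠ 0 := by
      refine mul_ne_zero hn0 (mul_ne_zero ?_ (pow_ne_zero _ hc0))
      intro hz
      exact hn1 (by linear_combination -hz)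
    exact hne h0
  obtain ⟨g, hg⟩ := h2
  have hgc : g.eval c ≠ 0 := by
    intro h0
    apply h3
    obtain ⟨w, hw⟩ := dvd_iff_isRoot.mpr h0
    exact ⟨w, by rw [hg, hw]; ring⟩
  have hg0 : g ≠ 0 := by
    intro h0
    exact hf0 (by rw [hg, h0, mul_zero])
  refine ⟨g, hg, ?_, hgc⟩
  intro x hx
  by_contra hxu
  have hx0 : x ≠ 0 := by
    rintro rfl
    exact hg0 (zero_dvd_iff.mp (by simpa using hx))
  obtain ⟨q, hqi, hqx⟩ := WfDvdMonoid.exists_irreducible_factor hxu hx0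
  have hqg : q ∣ g := hqx.trans ((dvd_mul_right x x).trans hx)
  have hqq : q ^ 2 ∣ g := by
    rw [sq]
    exact (mul_dvd_mul hqx hqx).trans hx
  have hgf : g ∣ f := ⟨(X - C c) ^ 2, by rw [hg, mul_comm]⟩
  have hq2f : q ^ 2 ∣ f := hqq.trans hgf
  have hqf : q ∣ f := hqg.trans hgf
  have hqf' : q ∣ derivative f := by
    simpa using aux_pow_succ_dvd_derivative (k := 1) hq2f
  have hXq : X - C c ∣ q := hstep q hqf hqf' hqi.not_isUnit
  have : g.eval c = 0 := dvd_iff_isRoot.mp (hXq.trans hqg)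
  exact hgc this
end

section
/- Let p be an odd prime, q = p^k a power of p, K a field with q elements, F an algebraically closed field containing K (with structure map algebraMap : K → F), and fix y ∈ F with y ≠ 0 such that y² is the image of a non-square element of K^×. Then the set of matrices { M ∈ SL₂(F) : there exists λ ∈ F^× such that every entry of λ·M lies in the image of K } equals the subgroup of SL₂(F) generated by the image of SL₂(K) together with the matrix [[0, −y], [y⁻¹, 0]]. -/
open Matrix

/-- Let `p` be an odd prime, `q = p^k`, `K` a field with `q` elements, `F` an
algebraically closed field containing `K`, and `y ∈ F`, `y ≠ 0`, with `y²` the image of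
a non-square element of `K^×`. Then
`{ M ∈ SL₂(F) : ∃ λ ∈ F^×, all entries of λ·M lie in (the image of) K }` is the subgroup
of `SL₂(F)` generated by the image of `SL₂(K)` and the matrix `[[0, -y], [y⁻¹, 0]]`. -/
theorem two_minus_PGL2_description (p k q : ℕ) (hp : p.Prime) (hodd : Odd p)
    (hk : 1 ≤ k) (hq : q = p ^ k)
    (K : Type) [Field K] [Fintype K] (hcard : Fintype.card K = q)
    (F : Type) [Field F] [IsAlgClosed F] [Algebra K F]
    (y : F) (hy : y ≠ 0) (c : K) (hc : c ≠ 0) (hcns : ¬ IsSquare c)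
    (hyc : y ^ 2 = algebraMap K F c)
    (J : Matrix.SpecialLinearGroup (Fin 2) F)
    (hJ : (J : Matrix (Fin 2) (Fin 2) F) = !![0, -y; y⁻¹, 0]) :
    {M : Matrix.SpecialLinearGroup (Fin 2) F |
        ∃ l : F, l ≠ 0 ∧ ∀ i j : Fin 2,
          l * (M : Matrix (Fin 2) (Fin 2) F) i j ∈ Set.range (algebraMap K F)}
      = ↑(Subgroup.closure
          (Set.range (Matrix.SpecialLinearGroup.map (algebraMap K F)) ∪ {J})) := by
  classical
  set φ := algebraMap K F with hφ
  -- basic closure properties of the range of φ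
  have hr0 : (0 : F) ∈ Set.range φ := ⟨0, map_zero φ⟩
  have hr1 : (1 : F) ∈ Set.range φ := ⟨1, map_one φ⟩
  have hrneg : ∀ x ∈ Set.range φ, -x ∈ Set.range φ := by
    rintro x ⟨a, rfl⟩; exact ⟨-a, map_neg φ a⟩
  have hrmul : ∀ x ∈ Set.range φ, ∀ z ∈ Set.range φ, x * z ∈ Set.range φ := by
    rintro x ⟨a, rfl⟩ z ⟨b, rfl⟩; exact ⟨a * b, map_mul φ a b⟩
  have hradd : ∀ x ∈ Set.range φ, ∀ z ∈ Set.range φ, x + z ∈ Set.range φ := by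
    rintro x ⟨a, rfl⟩ z ⟨b, rfl⟩; exact ⟨a + b, map_add φ a b⟩
  -- characteristic of K is not 2
  have hchar : ringChar K ≠ 2 := by
    intro h2
    obtain ⟨n, hrp, hcn⟩ := FiniteField.card K (ringChar K)
    rw [h2] at hcn
    have hdvd : p ∣ 2 ^ (n : ℕ) := by
      rw [← hcn, hcard, hq]; exact dvd_pow_self p (by omega)
    have hp2 : p = 2 := (Nat.prime_dvd_prime_iff_eq hp Nat.prime_two).mp
      (hp.dvd_of_dvd_pow hdvd)
    rw [hp2] at hodd
    exact (Nat.not_odd_iff_even.mpr (by decide)) hodd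
  -- product of two nonsquares is a square
  have key : ∀ d : K, d ≠ 0 → ¬ IsSquare d → IsSquare (d * c) := by
    intro d hd hnd
    have h1 : quadraticChar K (d * c) = 1 := by
      rw [_root_.map_mul, quadraticChar_neg_one_iff_not_isSquare.mpr hnd,
        quadraticChar_neg_one_iff_not_isSquare.mpr hcns]
      ring
    exact (quadraticChar_one_iff_isSquare (mul_ne_zero hd hc)).mp h1
  -- square roots transfer along φ
  have hsq : ∀ (d : K) (l : F), IsSquare d → l ^ 2 = φ d →
      ∃ e : K, e ^ 2 = d ∧ l = φ e := by
    rintro d l ⟨e, rfl⟩ hl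
    have h0 : (l - φ e) * (l + φ e) = 0 := by
      have h2 : φ (e * e) = φ e * φ e := _root_.map_mul φ e e
      linear_combination hl + h2
    rcases mul_eq_zero.mp h0 with h | h
    · exact ⟨e, by ring, sub_eq_zero.mp h⟩
    · refine ⟨-e, by ring, ?_⟩
      rw [map_neg]
      exact eq_neg_of_add_eq_zero_left h
  -- the LHS is a subgroup
  let S : Subgroup (Matrix.SpecialLinearGroup (Fin 2) F) :=
    { carrier := {M : Matrix.SpecialLinearGroup (Fin 2) F |
        ∃ l : F, l ≠ 0 ∧ ∀ i j : Fin 2,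
          l * (M : Matrix (Fin 2) (Fin 2) F) i j ∈ Set.range φ}
      one_mem' := by
        refine ⟨1, one_ne_zero, fun i j => ?_⟩
        rcases eq_or_ne i j with h | h
        · simpa [Matrix.SpecialLinearGroup.coe_one, Matrix.one_apply, h] using hr1
        · simpa [Matrix.SpecialLinearGroup.coe_one, Matrix.one_apply, h] using hr0
      mul_mem' := by
        rintro A B ⟨l, hl, hA⟩ ⟨m, hm, hB⟩
        refine ⟨l * m, mul_ne_zero hl hm, fun i j => ?_⟩
        have hrw : l * m * ((A * B : Matrix.SpecialLinearGroup (Fin 2) F) :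
            Matrix (Fin 2) (Fin 2) F) i j
            = (l * (A : Matrix (Fin 2) (Fin 2) F) i 0) * (m * (B : Matrix (Fin 2) (Fin 2) F) 0 j)
              + (l * (A : Matrix (Fin 2) (Fin 2) F) i 1) * (m * (B : Matrix (Fin 2) (Fin 2) F) 1 j) := by
          rw [Matrix.SpecialLinearGroup.coe_mul, Matrix.mul_apply, Fin.sum_univ_two]
          ring
        rw [hrw]
        exact hradd _ (hrmul _ (hA i 0) _ (hB 0 j)) _ (hrmul _ (hA i 1) _ (hB 1 j))
      inv_mem' := by
        rintro A ⟨l, hl, hA⟩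
        refine ⟨l, hl, fun i j => ?_⟩
        rw [Matrix.SpecialLinearGroup.coe_inv, Matrix.adjugate_fin_two]
        fin_cases i <;> fin_cases j <;> simp [mul_neg]
        · exact hA 1 1
        · exact hrneg _ (hA 0 1)
        · exact hrneg _ (hA 1 0)
        · exact hA 0 0 }
  -- generators lie in S
  have hgen : (Set.range (Matrix.SpecialLinearGroup.map φ) ∪ {J} :
      Set (Matrix.SpecialLinearGroup (Fin 2) F)) ⊆ S := by
    rintro x (⟨A, rfl⟩ | rfl)
    · refine ⟨1, one_ne_zero, fun i j => ?_⟩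
      rw [Matrix.SpecialLinearGroup.map_apply_coe, RingHom.mapMatrix_apply, one_mul,
        Matrix.map_apply]
      exact ⟨A i j, rfl⟩
    · refine ⟨y, hy, fun i j => ?_⟩
      rw [hJ]
      fin_cases i <;> fin_cases j <;> simp [mul_inv_cancel₀ hy]
      · exact ⟨-c, by rw [map_neg, ← hyc]; ring⟩
      · exact hr1
  have hle : Subgroup.closure
      (Set.range (Matrix.SpecialLinearGroup.map φ) ∪ {J}) ≤ S :=
    (Subgroup.closure_le S).mpr hgen
  apply Set.Subset.antisymm
  · -- hard direction
    rintro M ⟨l, hl, hM⟩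
    choose N hN using hM
    set Nm : Matrix (Fin 2) (Fin 2) K := Matrix.of N with hNm
    have hNapp : ∀ i j, φ (Nm i j) = l * (M : Matrix (Fin 2) (Fin 2) F) i j := hN
    have hmapN : Nm.map φ = l • (M : Matrix (Fin 2) (Fin 2) F) := by
      ext i j
      rw [Matrix.map_apply, hNapp i j, Matrix.smul_apply, smul_eq_mul]
    set d : K := Nm.det with hd
    have hdet : φ d = l ^ 2 := by
      have h1 : φ d = (Nm.map φ).det := RingHom.map_det φ Nm
      rw [hmapN, Matrix.det_smul, M.prop] at h1
      simpa using h1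
    have hd0 : d ≠ 0 := by
      intro h
      rw [h, map_zero] at hdet
      exact pow_ne_zero 2 hl hdet.symm
    -- helper: building an element of the image of SL2(K)
    have himg : ∀ (e : K) (P : Matrix (Fin 2) (Fin 2) K) (hPdet : P.det = e ^ 2)
        (he : e ≠ 0) (W : Matrix.SpecialLinearGroup (Fin 2) F)
        (hW : P.map φ = φ e • (W : Matrix (Fin 2) (Fin 2) F)),
        W ∈ Subgroup.closure
          (Set.range (Matrix.SpecialLinearGroup.map φ) ∪ {J}) := by
      intro e P hPdet he W hW
      have hdetA : (e⁻¹ • P).det = 1 := by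
        rw [Matrix.det_smul, hPdet]
        simp only [Fintype.card_fin]
        field_simp
      set A : Matrix.SpecialLinearGroup (Fin 2) K := ⟨e⁻¹ • P, hdetA⟩ with hA
      have hφe : φ e ≠ 0 := fun h => he ((map_eq_zero φ).mp h)
      have hcoe : ((Matrix.SpecialLinearGroup.map φ A :
          Matrix.SpecialLinearGroup (Fin 2) F) : Matrix (Fin 2) (Fin 2) F)
          = (W : Matrix (Fin 2) (Fin 2) F) := by
        rw [Matrix.SpecialLinearGroup.map_apply_coe, RingHom.mapMatrix_apply]
        ext i j
        have h1 : ((e⁻¹ • P).map φ) i j = φ e⁻¹ * (P.map φ) i j := by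
          simp [Matrix.map_apply, Matrix.smul_apply, smul_eq_mul, _root_.map_mul]
        show ((e⁻¹ • P).map φ) i j = _
        rw [h1, hW, Matrix.smul_apply, smul_eq_mul, map_inv₀, ← mul_assoc,
          inv_mul_cancel₀ hφe, one_mul]
      have : Matrix.SpecialLinearGroup.map φ A = W := Subtype.ext hcoe
      rw [← this]
      exact Subgroup.subset_closure (Or.inl ⟨A, rfl⟩)
    by_cases hds : IsSquare d
    · obtain ⟨e, he2, hle'⟩ := hsq d l hds hdet.symm
      have he0 : e ≠ 0 := by
        intro h; rw [h] at he2; exact hd0 (by rw [← he2]; ring)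
      refine SetLike.mem_coe.mpr (himg e Nm (by rw [← hd, he2]) he0 M ?_)
      rw [hmapN, ← hle']
    · have hdc : IsSquare (d * c) := key d hd0 hds
      have hly : (l * y) ^ 2 = φ (d * c) := by
        rw [_root_.map_mul, hdet, ← hyc]; ring
      obtain ⟨e, he2, hle'⟩ := hsq (d * c) (l * y) hdc hly
      have he0 : e ≠ 0 := by
        intro h; rw [h] at he2
        exact mul_ne_zero hd0 hc (by rw [← he2]; ring)
      set P : Matrix (Fin 2) (Fin 2) K := !![0, -c; 1, 0] with hP
      have hPmap : P.map φ = y • (J : Matrix (Fin 2) (Fin 2) F) := by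
        rw [hJ]
        ext i j
        fin_cases i <;> fin_cases j <;>
          simp [hP, Matrix.map_apply, Matrix.smul_apply, smul_eq_mul, mul_inv_cancel₀ hy,
            map_neg, ← hyc] <;> ring
      have hdetNP : (Nm * P).det = e ^ 2 := by
        rw [Matrix.det_mul, ← hd, he2, hP, Matrix.det_fin_two_of]
        ring
      have hmapNP : (Nm * P).map φ = φ e • ((M * J : Matrix.SpecialLinearGroup (Fin 2) F) :
          Matrix (Fin 2) (Fin 2) F) := by
        rw [Matrix.SpecialLinearGroup.coe_mul, _root_.Matrix.map_mul, hmapN, hPmap, ← hle',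
          smul_mul_assoc, Matrix.mul_smul, smul_smul]
      have hMJ : (M * J) ∈ Subgroup.closure
          (Set.range (Matrix.SpecialLinearGroup.map φ) ∪ {J}) :=
        himg e (Nm * P) hdetNP he0 (M * J) hmapNP
      have hJmem : J ∈ Subgroup.closure
          (Set.range (Matrix.SpecialLinearGroup.map φ) ∪ {J}) :=
        Subgroup.subset_closure (Or.inr rfl)
      have : M = (M * J) * J⁻¹ := by group
      rw [this]
      exact SetLike.mem_coe.mpr (mul_mem hMJ (inv_mem hJmem))
  · intro M hM
    exact hle (SetLike.mem_coe.mp hM)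
end

section
/- Let F̄₅ be an algebraic closure of 𝔽₅ = ℤ/5ℤ, fix ζ ∈ F̄₅ of multiplicative order 8 with ζ² = 2, let r ≥ 1 be an integer, and fix u ∈ F̄₅^× of multiplicative order 2^r. Inside GL₂(F̄₅), let Z be the subgroup generated by the scalar matrix u·I, let G₂ be the subgroup generated by the image of SL₂(𝔽₅) and the matrix j := [[0, ζ], [−ζ⁻¹, 0]], and let G̃ᵣ be the subgroup generated by Z and G₂. Suppose α : Z → ℂ^× is a group homomorphism with α((u·I)^{2^{r−1}}) = 1 (i.e. α is trivial on the scalar matrix −I ∈ Z) and β : G₂ → ℂ^× is a group homomorphism with β(−I) = 1. Then there exists a unique group homomorphism χ : G̃ᵣ → ℂ^× whose restriction to Z is α and whose restriction to G₂ is β. -/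
/-!
`Z` is central, so multiplication `Z × G₂ → Z ⊔ G₂` is a surjective homomorphism whose kernel
is the antidiagonal copy of `Z ⊓ G₂`; hence two characters of `Z` and `G₂` glue to a unique
character of `Z ⊔ G₂` as soon as they agree on `Z ⊓ G₂`. Central elements of `GL₂` are scalars
and elements of `G₂` have determinant `1`, so `Z ⊓ G₂ ⊆ {±I}`, and both characters are trivial
there because `-I = (u • I) ^ 2 ^ (r - 1)` is the element of order `2` of `Z`.
-/

open Matrix

namespace Subgroup

variable {G A : Type*} [Group G] [CommGroup A] {H K : Subgroup G}

def mulSup (hHK : H ≤ centralizer K) : H × K →* ↥(H ⊔ K) :=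
  (inclusion le_sup_left).noncommCoprod (inclusion le_sup_right) fun h k =>
    Subtype.ext (mem_centralizer_iff.mp (hHK h.2) k k.2).symm

theorem mulSup_comp_inl (hHK : H ≤ centralizer K) :
    (mulSup hHK).comp (MonoidHom.inl H K) = inclusion le_sup_left :=
  MonoidHom.noncommCoprod_comp_inl ..

theorem mulSup_comp_inr (hHK : H ≤ centralizer K) :
    (mulSup hHK).comp (MonoidHom.inr H K) = inclusion le_sup_right :=
  MonoidHom.noncommCoprod_comp_inr ..

theorem mulSup_surjective (hHK : H ≤ centralizer K) : Function.Surjective (mulSup hHK) := by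
  rintro ⟨x, hx⟩
  rw [← SetLike.mem_coe, coe_mul_of_left_le_normalizer_right H K
    (hHK.trans (centralizer_le_normalizer _))] at hx
  obtain ⟨h, hh, k, hk, rfl⟩ := hx
  exact ⟨(⟨h, hh⟩, ⟨k, hk⟩), rfl⟩

theorem ker_mulSup_le_ker_coprod (hHK : H ≤ centralizer K) {α : H →* A} {β : K →* A}
    (hαβ : ∀ x (hxH : x ∈ H) (hxK : x ∈ K), α ⟨x, hxH⟩ = β ⟨x, hxK⟩) :
    (mulSup hHK).ker ≤ (α.coprod β).ker := by
  rintro ⟨⟨h, hh⟩, ⟨k, hk⟩⟩ hhk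
  have hhk' : h * k = 1 := congrArg Subtype.val hhk
  have hhK : h ∈ K := eq_inv_of_mul_eq_one_left hhk' ▸ inv_mem hk
  rw [MonoidHom.mem_ker, MonoidHom.coprod_apply, hαβ h hh hhK, ← map_mul,
    show (⟨h, hhK⟩ * ⟨k, hk⟩ : K) = 1 from Subtype.ext hhk', map_one]

theorem comp_mulSup_eq_coprod_iff (hHK : H ≤ centralizer K) {α : H →* A} {β : K →* A}
    (χ : ↥(H ⊔ K) →* A) :
    χ.comp (mulSup hHK) = α.coprod β ↔
      χ.comp (inclusion le_sup_left) = α ∧ χ.comp (inclusion le_sup_right) = β := by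
  rw [← mulSup_comp_inl hHK, ← mulSup_comp_inr hHK, ← MonoidHom.comp_assoc,
    ← MonoidHom.comp_assoc]
  constructor
  · intro h
    simp [h]
  · rintro ⟨hα, hβ⟩
    rw [← hα, ← hβ, MonoidHom.coprod_unique]

theorem existsUnique_hom_sup_of_le_centralizer (hHK : H ≤ centralizer K) (α : H →* A)
    (β : K →* A) (hαβ : ∀ x (hxH : x ∈ H) (hxK : x ∈ K), α ⟨x, hxH⟩ = β ⟨x, hxK⟩) :
    ∃! χ : ↥(H ⊔ K) →* A,
      χ.comp (inclusion le_sup_left) = α ∧ χ.comp (inclusion le_sup_right) = β := by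
  simp_rw [← comp_mulSup_eq_coprod_iff hHK]
  have hker := ker_mulSup_le_ker_coprod hHK hαβ
  exact ⟨(mulSup hHK).liftOfSurjective (mulSup_surjective hHK) ⟨_, hker⟩,
    MonoidHom.liftOfRightInverse_comp .., fun χ hχ ↦
      MonoidHom.eq_liftOfRightInverse _ _ _ _ hker χ hχ⟩

end Subgroup

theorem Matrix.GeneralLinearGroup.eq_one_or_eq_neg_one_of_mem_center_of_det_eq_one
    {R : Type*} [CommRing R] [NoZeroDivisors R] {g : GL (Fin 2) R}
    (hg : g ∈ Subgroup.center (GL (Fin 2) R)) (hdet : det g = 1) : g = 1 ∨ g = -1 := by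
  rw [center_eq_range_scalar] at hg
  obtain ⟨a, rfl⟩ := hg
  rw [det_scalar, Fintype.card_fin, sq, Units.ext_iff, Units.val_mul, Units.val_one,
    mul_self_eq_one_iff] at hdet
  rcases hdet with ha | ha
  · left; ext i j; simp [ha]
  · right; ext i j; fin_cases i <;> fin_cases j <;> simp [ha]

theorem pow_two_pow_pred_eq_neg_one {R : Type*} [CommRing R] [NoZeroDivisors R] {u : R}
    {r : ℕ} (hr : 1 ≤ r) (hu : orderOf u = 2 ^ r) : u ^ 2 ^ (r - 1) = -1 := by
  have hquot : 2 ^ r / 2 ^ (r - 1) = 2 := by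
    rw [Nat.pow_div (Nat.sub_le r 1) two_pos, Nat.sub_sub_self hr, pow_one]
  have hprim := (hu ▸ IsPrimitiveRoot.orderOf u).pow_of_dvd (by positivity)
    (Nat.pow_dvd_pow 2 (Nat.sub_le r 1))
  rw [hquot] at hprim
  exact hprim.eq_neg_one_of_two_right

theorem glue_characters_on_central_extension_general
    (F : Type) [Field F] [Algebra (ZMod 5) F]
    (ζ : F) (hζ8 : orderOf ζ = 8)
    (r : ℕ) (hr : 1 ≤ r) (u : F) (hu : orderOf u = 2 ^ r)
    (s j : Matrix.GeneralLinearGroup (Fin 2) F)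
    (hs : (s : Matrix (Fin 2) (Fin 2) F) = u • (1 : Matrix (Fin 2) (Fin 2) F))
    (hj : (j : Matrix (Fin 2) (Fin 2) F) = !![0, ζ; -ζ⁻¹, 0])
    (Z : Subgroup (Matrix.GeneralLinearGroup (Fin 2) F)) (hZ : Z = Subgroup.closure {s})
    (G₂ : Subgroup (Matrix.GeneralLinearGroup (Fin 2) F))
    (hG₂ : G₂ = Subgroup.closure
      (Set.range (Matrix.SpecialLinearGroup.toGL.comp
        (Matrix.SpecialLinearGroup.map (algebraMap (ZMod 5) F))) ∪ {j}))
    (α : Z →* ℂˣ)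
    (hα : ∀ z : Z, (z : Matrix.GeneralLinearGroup (Fin 2) F) = s ^ 2 ^ (r - 1) → α z = 1)
    (β : G₂ →* ℂˣ)
    (hβ : ∀ g : G₂, (g : Matrix.GeneralLinearGroup (Fin 2) F) = -1 → β g = 1) :
    ∃! χ : (Z ⊔ G₂ : Subgroup (Matrix.GeneralLinearGroup (Fin 2) F)) →* ℂˣ,
      χ.comp (Subgroup.inclusion le_sup_left) = α ∧
      χ.comp (Subgroup.inclusion le_sup_right) = β := by
  have hζ : ζ ≠ 0 := (hζ8 ▸ IsPrimitiveRoot.orderOf ζ).ne_zero (by norm_num)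
  have hZ_center : Z ≤ Subgroup.center _ := by
    rw [hZ, Subgroup.closure_le, Set.singleton_subset_iff]
    exact GeneralLinearGroup.mem_center_iff_val_mem_range_scalar.mpr
      ⟨u, by rw [hs, smul_one_eq_diagonal]; rfl⟩
  have hG₂_det : G₂ ≤ GeneralLinearGroup.det.ker := by
    rw [hG₂, Subgroup.closure_le, Set.union_subset_iff, Set.singleton_subset_iff]
    refine ⟨?_, ?_⟩
    · rintro _ ⟨A, rfl⟩
      ext
      simp
    · ext
      simp [hj, det_fin_two_of, hζ]
  have hs_pow : s ^ 2 ^ (r - 1) = -1 :=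
    Units.ext (by simp [hs, smul_pow, pow_two_pow_pred_eq_neg_one hr hu])
  refine Subgroup.existsUnique_hom_sup_of_le_centralizer
    (hZ_center.trans (Subgroup.center_le_centralizer _)) α β fun x hxZ hxG₂ ↦ ?_
  rcases GeneralLinearGroup.eq_one_or_eq_neg_one_of_mem_center_of_det_eq_one (hZ_center hxZ)
    (hG₂_det hxG₂) with rfl | rfl
  · exact (map_one α).trans (map_one β).symm
  · rw [hα _ hs_pow.symm, hβ _ rfl]

/-- Lemma 4.1 of the paper: in `GL₂(F̄₅)`, with `Z` generated by the scalar matrix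
`u·I` (`u` of order `2^r`) and `G₂` generated by the image of `SL₂(𝔽₅)` and
`j = [[0, ζ], [-ζ⁻¹, 0]]` (`ζ` of order `8`, `ζ² = 2`), any character `α` of `Z`
trivial on `(u·I)^{2^{r-1}} = -I` and any character `β` of `G₂` trivial on `-I` glue to
a unique character `χ` of the subgroup generated by `Z` and `G₂`. -/
theorem glue_characters_on_central_extension
    (F : Type) [Field F] [Algebra (ZMod 5) F] [IsAlgClosed F] [Algebra.IsAlgebraic (ZMod 5) F]
    (ζ : F) (hζ8 : orderOf ζ = 8) (hζ2 : ζ ^ 2 = 2)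
    (r : ℕ) (hr : 1 ≤ r) (u : F) (hu : orderOf u = 2 ^ r)
    (s j : Matrix.GeneralLinearGroup (Fin 2) F)
    (hs : (s : Matrix (Fin 2) (Fin 2) F) = u • (1 : Matrix (Fin 2) (Fin 2) F))
    (hj : (j : Matrix (Fin 2) (Fin 2) F) = !![0, ζ; -ζ⁻¹, 0])
    (Z : Subgroup (Matrix.GeneralLinearGroup (Fin 2) F)) (hZ : Z = Subgroup.closure {s})
    (G₂ : Subgroup (Matrix.GeneralLinearGroup (Fin 2) F))
    (hG₂ : G₂ = Subgroup.closure
      (Set.range (Matrix.SpecialLinearGroup.toGL.comp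
        (Matrix.SpecialLinearGroup.map (algebraMap (ZMod 5) F))) ∪ {j}))
    (α : Z →* ℂˣ)
    (hα : ∀ z : Z, (z : Matrix.GeneralLinearGroup (Fin 2) F) = s ^ 2 ^ (r - 1) → α z = 1)
    (β : G₂ →* ℂˣ)
    (hβ : ∀ g : G₂, (g : Matrix.GeneralLinearGroup (Fin 2) F) = -1 → β g = 1) :
    ∃! χ : (Z ⊔ G₂ : Subgroup (Matrix.GeneralLinearGroup (Fin 2) F)) →* ℂˣ,
      χ.comp (Subgroup.inclusion le_sup_left) = α ∧
      χ.comp (Subgroup.inclusion le_sup_right) = β :=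
  glue_characters_on_central_extension_general F ζ hζ8 r hr u hu s j hs hj Z hZ G₂ hG₂ α hα β hβ
end

section
/- Let F̄₅ be an algebraic closure of 𝔽₅ = ℤ/5ℤ, fix ζ ∈ F̄₅ of multiplicative order 8 with ζ² = 2, and let G̃ ⊆ GL₂(F̄₅) be the subgroup generated by the image of SL₂(𝔽₅), the scalar matrix 2·I, and the matrix [[0, ζ], [−ζ⁻¹, 0]]. Then G̃ has exactly 480 elements. -/
open Matrix

/-- `-1` in `SL₂(𝔽₅)`. -/
def negOneSL : SpecialLinearGroup (Fin 2) (ZMod 5) :=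
  ⟨!![4, 0; 0, 4], by decide⟩

/-- Conjugation by `!![0,2;-1,0]` as a self-map of `SL₂(𝔽₅)`. -/
def mySigma (A : SpecialLinearGroup (Fin 2) (ZMod 5)) : SpecialLinearGroup (Fin 2) (ZMod 5) :=
  ⟨!![A.1 1 1, 3 * A.1 1 0; 2 * A.1 0 1, A.1 0 0], by
    have h := A.2
    rw [Matrix.det_fin_two] at h
    rw [Matrix.det_fin_two_of]
    have h5 : (5 : ZMod 5) = 0 := by decide
    linear_combination h - A.1 0 1 * A.1 1 0 * h5⟩

theorem noSqrt2 : ∀ x : ZMod 5, x ^ 2 ≠ 2 := by decide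

set_option maxRecDepth 40000 in
theorem cardSL5 : Nat.card (Matrix.SpecialLinearGroup (Fin 2) (ZMod 5)) = 120 := by
  rw [Nat.card_eq_fintype_card]; decide

/-- The subgroup `G̃ = 4₋PGL₂(𝔽₅) = C₄·₆S₅` of `GL₂(F̄₅)` generated by the image of
`SL₂(𝔽₅)`, the scalar matrix `2·I` and `[[0, ζ], [-ζ⁻¹, 0]]` (with `ζ` of order `8`,
`ζ² = 2`) has exactly `480` elements. -/
theorem card_4minusPGL2_F5
    (F : Type) [Field F] [Algebra (ZMod 5) F] [IsAlgClosed F] [Algebra.IsAlgebraic (ZMod 5) F]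
    (ζ : F) (hζ8 : orderOf ζ = 8) (hζ2 : ζ ^ 2 = 2)
    (s j : Matrix.GeneralLinearGroup (Fin 2) F)
    (hs : (s : Matrix (Fin 2) (Fin 2) F) = (2 : Matrix (Fin 2) (Fin 2) F))
    (hj : (j : Matrix (Fin 2) (Fin 2) F) = !![0, ζ; -ζ⁻¹, 0])
    (G : Subgroup (Matrix.GeneralLinearGroup (Fin 2) F))
    (hG : G = Subgroup.closure
      (Set.range (Matrix.SpecialLinearGroup.toGL.comp
        (Matrix.SpecialLinearGroup.map (algebraMap (ZMod 5) F))) ∪ {s, j})) :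
    Nat.card G = 480 := by
  subst hG
  haveI : Fact (Nat.Prime 5) := ⟨by norm_num⟩
  haveI : CharP F 5 := charP_of_injective_algebraMap (algebraMap (ZMod 5) F).injective 5
  have h5 : (5 : F) = 0 := CharP.cast_eq_zero F 5
  have h2 : (2 : F) ≠ 0 := by
    intro h2
    have h1 : (1 : F) = 0 := by linear_combination h5 - 2 * h2
    simp at h1
  have hζ0 : ζ ≠ 0 := by
    rintro rfl
    rw [zero_pow (by norm_num)] at hζ2
    exact h2 hζ2.symm
  have hζi : ζ⁻¹ = 3 * ζ := by
    field_simp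
    linear_combination -3 * hζ2 - h5
  set φ : SpecialLinearGroup (Fin 2) (ZMod 5) →* GL (Fin 2) F := (Matrix.SpecialLinearGroup.toGL.comp
      (Matrix.SpecialLinearGroup.map (algebraMap (ZMod 5) F))) with hφ
  have hφval : ∀ A : SpecialLinearGroup (Fin 2) (ZMod 5),
      ((φ A : GL (Fin 2) F) : Matrix (Fin 2) (Fin 2) F)
        = (A : Matrix (Fin 2) (Fin 2) (ZMod 5)).map (algebraMap (ZMod 5) F) := by
    intro A; rw [hφ]; rfl
  -- s is central
  have h2m : (2 : Matrix (Fin 2) (Fin 2) F) = !![2, 0; 0, 2] := by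
    rw [← Matrix.diagonal_ofNat]
    ext i k; fin_cases i <;> fin_cases k <;> simp [Matrix.diagonal_apply]
  have hscomm : ∀ g : GL (Fin 2) F, s * g = g * s := by
    intro g
    apply Units.ext
    rw [Units.val_mul, Units.val_mul, hs]
    exact Commute.ofNat_left 2 (g : Matrix (Fin 2) (Fin 2) F)
  -- φ negOneSL is central
  have hnegval : ((φ negOneSL : GL (Fin 2) F) : Matrix (Fin 2) (Fin 2) F)
      = -1 := by
    rw [hφval]
    ext i k
    fin_cases i <;> fin_cases k <;>
      simp [negOneSL, Matrix.one_apply, Matrix.map_apply, map_ofNat] <;>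
      linear_combination h5
  have hnegcomm : ∀ g : GL (Fin 2) F, φ negOneSL * g = g * φ negOneSL := by
    intro g
    apply Units.ext
    rw [Units.val_mul, Units.val_mul, hnegval, neg_one_mul, mul_neg_one]
  have hnegneg : negOneSL * negOneSL = 1 := by
    apply Subtype.ext; decide
  -- s * s = φ negOneSL
  have hss : s * s = φ negOneSL := by
    apply Units.ext
    rw [Units.val_mul, hs, hnegval, h2m]
    ext i k
    fin_cases i <;> fin_cases k <;>
      simp [Matrix.mul_apply, Fin.sum_univ_two, Matrix.one_apply] <;>
      linear_combination h5
  -- j * j = φ negOneSL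
  have hjj : j * j = φ negOneSL := by
    apply Units.ext
    rw [Units.val_mul, hj, hnegval]
    ext i k
    fin_cases i <;> fin_cases k <;>
      simp [Matrix.mul_apply, Fin.sum_univ_two, Matrix.one_apply, hζi]
    all_goals first
      | linear_combination 3 * hζ2 + h5
      | linear_combination -3 * hζ2 - h5
  -- conjugation of the SL₂(𝔽₅)-part by j
  have hjφ : ∀ A : SpecialLinearGroup (Fin 2) (ZMod 5),
      j * φ A = φ (mySigma A) * j := by
    intro A
    apply Units.ext
    rw [Units.val_mul, Units.val_mul, hj, hφval, hφval]
    ext i k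
    fin_cases i <;> fin_cases k <;>
      simp [Matrix.mul_apply, Fin.sum_univ_two, Matrix.map_apply, mySigma, hζi, map_ofNat]
    all_goals first
      | linear_combination (0 : F) * h5
      | linear_combination -ζ * (algebraMap (ZMod 5) F (A.1 0 1)) * h5
      | linear_combination ζ * (algebraMap (ZMod 5) F (A.1 0 1)) * h5
      | linear_combination ζ * (algebraMap (ZMod 5) F (A.1 1 0)) * 2 * h5
      | linear_combination -ζ * (algebraMap (ZMod 5) F (A.1 1 0)) * 2 * h5
  -- commutation helpers
  have hjS : ∀ a : Bool, j * (cond a s 1) = (cond a s 1) * j := by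
    intro a; cases a
    · simp
    · exact (hscomm j).symm
  have hSneg : ∀ a : Bool, (cond a s 1) * φ negOneSL = φ negOneSL * (cond a s 1) := by
    intro a; cases a
    · simp
    · exact (hnegcomm s).symm
  -- inverses of s and j
  have hsinv : s⁻¹ = φ negOneSL * s := by
    refine inv_eq_of_mul_eq_one_left ?_
    rw [mul_assoc, hss, ← _root_.map_mul, hnegneg, _root_.map_one]
  have hjinv : j⁻¹ = φ negOneSL * j := by
    refine inv_eq_of_mul_eq_one_left ?_
    rw [mul_assoc, hjj, ← _root_.map_mul, hnegneg, _root_.map_one]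
  -- the parametrization
  set Ψ : SpecialLinearGroup (Fin 2) (ZMod 5) × Bool × Bool → GL (Fin 2) F :=
    fun p => φ p.1 * (cond p.2.1 s 1) * (cond p.2.2 j 1) with hΨ
  have hΨapp : ∀ A a b, Ψ (A, a, b) = φ A * (cond a s 1) * (cond b j 1) := fun _ _ _ => rfl
  have hmulφ : ∀ (B : SpecialLinearGroup (Fin 2) (ZMod 5)) (A : SpecialLinearGroup (Fin 2) (ZMod 5)) (a b : Bool),
      φ B * Ψ (A, a, b) = Ψ (B * A, a, b) := by
    intro B A a b
    rw [hΨapp, hΨapp, _root_.map_mul, mul_assoc, mul_assoc]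
    exact (mul_assoc _ _ _).symm
  have hmuls : ∀ A a b, ∃ q, s * Ψ (A, a, b) = Ψ q := by
    intro A a b
    cases a
    · refine ⟨(A, true, b), ?_⟩
      rw [hΨapp, hΨapp, Bool.cond_false, Bool.cond_true, mul_one, ← mul_assoc,
        ← hscomm (φ A)]
    · refine ⟨(A * negOneSL, false, b), ?_⟩
      rw [hΨapp, hΨapp, Bool.cond_false, Bool.cond_true, _root_.map_mul, mul_one,
        ← mul_assoc, ← mul_assoc s (φ A) s]
      rw [hscomm (φ A), mul_assoc (φ A) s s, hss]
  have hmulj : ∀ A a b, ∃ q, j * Ψ (A, a, b) = Ψ q := by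
    intro A a b
    cases b
    · refine ⟨(mySigma A, a, true), ?_⟩
      rw [hΨapp, hΨapp, Bool.cond_false, Bool.cond_true, mul_one, ← mul_assoc,
        hjφ A, mul_assoc (φ (mySigma A)) j _, hjS, ← mul_assoc]
    · refine ⟨(mySigma A * negOneSL, a, false), ?_⟩
      rw [hΨapp, hΨapp, Bool.cond_false, Bool.cond_true, _root_.map_mul, mul_one,
        ← mul_assoc, ← mul_assoc j (φ A) _, hjφ A, mul_assoc (φ (mySigma A)) j _, hjS,
        ← mul_assoc (φ (mySigma A)) _ j, mul_assoc _ j j, hjj,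
        mul_assoc (φ (mySigma A)) _ _, hSneg, ← mul_assoc]
  -- entries in the prime field
  have hQmul : ∀ x y : GL (Fin 2) F,
      (∀ i k, (x : Matrix (Fin 2) (Fin 2) F) i k ∈ (algebraMap (ZMod 5) F).range) →
      (∀ i k, (y : Matrix (Fin 2) (Fin 2) F) i k ∈ (algebraMap (ZMod 5) F).range) →
      (∀ i k, ((x * y : GL (Fin 2) F) : Matrix (Fin 2) (Fin 2) F) i k ∈
        (algebraMap (ZMod 5) F).range) := by
    intro x y hx hy i k
    rw [Units.val_mul, Matrix.mul_apply]
    exact Subring.sum_mem _ fun c _ => Subring.mul_mem _ (hx i c) (hy c k)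
  have hQφ : ∀ (A : SpecialLinearGroup (Fin 2) (ZMod 5)) i k,
      ((φ A : GL (Fin 2) F) : Matrix (Fin 2) (Fin 2) F) i k ∈ (algebraMap (ZMod 5) F).range := by
    intro A i k
    rw [hφval]
    exact ⟨A.1 i k, rfl⟩
  have hQs : ∀ i k, (s : Matrix (Fin 2) (Fin 2) F) i k ∈ (algebraMap (ZMod 5) F).range := by
    intro i k
    rw [hs, h2m]
    fin_cases i <;> fin_cases k <;> simp
    all_goals first
      | exact ⟨2, map_ofNat _ 2⟩
      | exact zero_mem _
  have hQcond : ∀ a : Bool, ∀ i k,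
      ((cond a s 1 : GL (Fin 2) F) : Matrix (Fin 2) (Fin 2) F) i k ∈
        (algebraMap (ZMod 5) F).range := by
    intro a
    cases a
    · intro i k
      rw [Bool.cond_false, Units.val_one]
      fin_cases i <;> fin_cases k <;> simp [Matrix.one_apply]
      all_goals first
        | exact one_mem _
        | exact zero_mem _
    · exact hQs
  have hQX : ∀ A a, ∀ i k,
      ((φ A * cond a s 1 : GL (Fin 2) F) : Matrix (Fin 2) (Fin 2) F) i k ∈
        (algebraMap (ZMod 5) F).range :=
    fun A a => hQmul _ _ (hQφ A) (hQcond a)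
  have hQXinv : ∀ A a, ∀ i k,
      (((φ A * cond a s 1)⁻¹ : GL (Fin 2) F) : Matrix (Fin 2) (Fin 2) F) i k ∈
        (algebraMap (ZMod 5) F).range := by
    intro A a
    have hrw : (φ A * cond a s 1)⁻¹ = (cond a s 1)⁻¹ * φ A⁻¹ := by
      rw [_root_.mul_inv_rev, map_inv]
    rw [hrw]
    refine hQmul _ _ ?_ (hQφ _)
    cases a
    · rw [Bool.cond_false, inv_one]
      intro i k
      have h1 := hQcond false i k
      rwa [Bool.cond_false] at h1
    · rw [Bool.cond_true, hsinv]
      exact hQmul _ _ (hQφ _) hQs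
  have hQj : ¬ (∀ i k, (j : Matrix (Fin 2) (Fin 2) F) i k ∈ (algebraMap (ZMod 5) F).range) := by
    intro h
    obtain ⟨c, hc⟩ := h 0 1
    rw [hj] at hc
    simp at hc
    have h2' : algebraMap (ZMod 5) F (c ^ 2) = algebraMap (ZMod 5) F 2 := by
      rw [map_pow, hc, hζ2, map_ofNat]
    have hc2 := (algebraMap (ZMod 5) F).injective h2'
    exact noSqrt2 c hc2
  -- the two "no collision" lemmas
  have keyj : ∀ (A : SpecialLinearGroup (Fin 2) (ZMod 5)) (a : Bool)
      (B : SpecialLinearGroup (Fin 2) (ZMod 5)) (c : Bool),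
      (φ A * cond a s 1) * j ≠ φ B * cond c s 1 := by
    intro A a B c h
    apply hQj
    have hje : j = (φ A * cond a s 1)⁻¹ * (φ B * cond c s 1) := by
      rw [← h, ← mul_assoc, inv_mul_cancel, one_mul]
    rw [hje]
    exact hQmul _ _ (hQXinv A a) (hQX B c)
  have hdm : ∀ C : SpecialLinearGroup (Fin 2) (ZMod 5),
      ((C : Matrix (Fin 2) (Fin 2) (ZMod 5)).map (algebraMap (ZMod 5) F)).det = 1 := by
    intro C
    rw [← RingHom.mapMatrix_apply, ← RingHom.map_det, C.2, _root_.map_one]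
  have keys : ∀ A B : SpecialLinearGroup (Fin 2) (ZMod 5), φ A * s ≠ φ B := by
    intro A B h
    have hdet : ((φ A * s : GL (Fin 2) F) : Matrix (Fin 2) (Fin 2) F).det
        = ((φ B : GL (Fin 2) F) : Matrix (Fin 2) (Fin 2) F).det := by rw [h]
    rw [Units.val_mul, hφval, hφval, Matrix.det_mul, hs, h2m, Matrix.det_fin_two_of,
      hdm, hdm] at hdet
    have h10 : (1 : F) = 0 := by linear_combination 2 * hdet - h5
    exact one_ne_zero h10
  have hφinj : Function.Injective φ := by
    intro A B h
    apply Subtype.ext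
    have hv := congrArg Units.val h
    rw [hφval, hφval] at hv
    ext i k
    have hv2 := congrFun (congrFun hv i) k
    rw [Matrix.map_apply, Matrix.map_apply] at hv2
    exact (algebraMap (ZMod 5) F).injective hv2
  have step2 : ∀ (A : SpecialLinearGroup (Fin 2) (ZMod 5)) (a : Bool)
      (B : SpecialLinearGroup (Fin 2) (ZMod 5)) (c : Bool),
      φ A * cond a s 1 = φ B * cond c s 1 → A = B ∧ a = c := by
    intro A a B c h
    cases a <;> cases c <;>
      simp only [Bool.cond_false, Bool.cond_true, mul_one] at h
    · exact ⟨hφinj h, rfl⟩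
    · exact absurd h.symm (keys B A)
    · exact absurd h (keys A B)
    · exact ⟨hφinj (mul_right_cancel h), rfl⟩
  have hΨinj : Function.Injective Ψ := by
    rintro ⟨A, a, b⟩ ⟨B, c, d⟩ h
    rw [hΨapp, hΨapp] at h
    cases b <;> cases d <;>
      simp only [Bool.cond_false, Bool.cond_true, mul_one] at h
    · obtain ⟨hAB, hac⟩ := step2 A a B c h
      rw [hAB, hac]
    · exact absurd h.symm (keyj B c A a)
    · exact absurd h (keyj A a B c)
    · obtain ⟨hAB, hac⟩ := step2 A a B c (mul_right_cancel h)
      rw [hAB, hac]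
  -- the closure is exactly the range of Ψ
  have hmem : ∀ x : GL (Fin 2) F,
      x ∈ Subgroup.closure (Set.range ⇑φ ∪ {s, j}) ↔ x ∈ Set.range Ψ := by
    intro x
    constructor
    · intro hx
      induction hx using Subgroup.closure_induction_left with
      | one => exact ⟨(1, false, false), by rw [hΨapp]; simp⟩
      | mul_left g hg y hy ih =>
        obtain ⟨⟨A, a, b⟩, rfl⟩ := ih
        rcases hg with ⟨B, rfl⟩ | hg
        · exact ⟨(B * A, a, b), (hmulφ B A a b).symm⟩
        · simp only [Set.mem_insert_iff, Set.mem_singleton_iff] at hg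
          rcases hg with rfl | rfl
          · obtain ⟨q, hq⟩ := hmuls A a b
            exact ⟨q, hq.symm⟩
          · obtain ⟨q, hq⟩ := hmulj A a b
            exact ⟨q, hq.symm⟩
      | inv_mul_cancel g hg y hy ih =>
        obtain ⟨⟨A, a, b⟩, rfl⟩ := ih
        rcases hg with ⟨B, rfl⟩ | hg
        · rw [← map_inv]
          exact ⟨(B⁻¹ * A, a, b), (hmulφ B⁻¹ A a b).symm⟩
        · simp only [Set.mem_insert_iff, Set.mem_singleton_iff] at hg
          rcases hg with rfl | rfl
          · rw [hsinv, mul_assoc]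
            obtain ⟨⟨A', a', b'⟩, hq⟩ := hmuls A a b
            rw [hq]
            exact ⟨(negOneSL * A', a', b'), (hmulφ negOneSL A' a' b').symm⟩
          · rw [hjinv, mul_assoc]
            obtain ⟨⟨A', a', b'⟩, hq⟩ := hmulj A a b
            rw [hq]
            exact ⟨(negOneSL * A', a', b'), (hmulφ negOneSL A' a' b').symm⟩
    · rintro ⟨⟨A, a, b⟩, rfl⟩
      rw [hΨapp]
      refine mul_mem (mul_mem ?_ ?_) ?_
      · exact Subgroup.subset_closure (Or.inl ⟨A, rfl⟩)
      · cases a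
        · exact one_mem _
        · exact Subgroup.subset_closure (Or.inr (Set.mem_insert s _))
      · cases b
        · exact one_mem _
        · exact Subgroup.subset_closure
            (Or.inr (Set.mem_insert_iff.mpr (Or.inr rfl)))
  have hsetEq : ((Subgroup.closure (Set.range ⇑φ ∪ {s, j}) :
      Subgroup (GL (Fin 2) F)) : Set (GL (Fin 2) F)) = Set.range Ψ :=
    Set.ext hmem
  have hcard : Nat.card (Subgroup.closure (Set.range ⇑φ ∪ {s, j})) =
      Nat.card (Set.range Ψ) :=
    Nat.card_congr (Equiv.setCongr hsetEq)
  rw [hcard, Nat.card_range_of_injective hΨinj, Nat.card_prod, Nat.card_prod, cardSL5,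
    Nat.card_eq_fintype_card, Fintype.card_bool]
end
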